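/- For every integer n ≥ 2, the domination number of the undirected n-constrained de Bruijn graph on n symbols (whose vertices are the permutations of [n]) satisfies γ(cDB(n,n,n)) = ⌈n/3⌉ · (n−1)!. -/

import Mathlib

/-!
For permutations the symbol appended along a de Bruijn edge is forced, so the out-neighbour
of `x` is its cyclic rotation `i ↦ x (i + 1)`. Recording a permutation by the rotation of it
that starts with `0` together with the position of `0` identifies `cDB(n,n,n)` with `(n - 1)!`
disjoint copies of the cycle on `Fin n`, rotation acting as `z ↦ z - 1`. In a cycle every
vertex dominates three vertices, so a dominating set has at least `n / 3` elements, and the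
multiples of `3` form one with `⌈n / 3⌉` elements.
-/

/-- A sequence `x` of length `n` over the alphabet `Fin d` is `t`-constrained if
equal symbols occur at positions at distance at least `t`. -/
def dbConstrained (d t n : ℕ) (x : Fin n → Fin d) : Prop :=
  ∀ i j : Fin n, i < j → x i = x j → t ≤ (j : ℕ) - (i : ℕ)

/-- The vertex set `V(d,t,n)` of the `t`-constrained de Bruijn graph: all
`t`-constrained sequences of length `n` over a `d`-letter alphabet. -/
abbrev dbVtx (d t n : ℕ) : Type := {x : Fin n → Fin d // dbConstrained d t n x}

/-- `dbShift x y` holds when there is a directed de Bruijn edge from `x` to `y`,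
i.e. `y` is obtained from `x` by deleting its first symbol and appending a new
last symbol. -/
def dbShift {d t n : ℕ} (x y : dbVtx d t n) : Prop :=
  ∀ (i : Fin n) (h : (i : ℕ) + 1 < n), y.val i = x.val ⟨(i : ℕ) + 1, h⟩

/-- `S` is a dominating set of the directed `t`-constrained de Bruijn graph
`cDB⁺(d,t,n)`: every vertex is dominated by (equal to, or an out-neighbor of)
some element of `S`. -/
def dbDirDominating {d t n : ℕ} (S : Set (dbVtx d t n)) : Prop :=
  ∀ v : dbVtx d t n, ∃ s ∈ S, s = v ∨ dbShift s v

/-- The domination number `γ(cDB⁺(d,t,n))` of the directed `t`-constrained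
de Bruijn graph. -/
noncomputable def gammaDir (d t n : ℕ) : ℕ :=
  sInf {k | ∃ S : Set (dbVtx d t n), S.Finite ∧ S.ncard = k ∧ dbDirDominating S}

/-- Adjacency in the undirected `t`-constrained de Bruijn graph `cDB(d,t,n)`:
edge directions are ignored and loops are removed. -/
def dbAdj {d t n : ℕ} (x y : dbVtx d t n) : Prop :=
  x ≠ y ∧ (dbShift x y ∨ dbShift y x)

/-- `S` is a dominating set of the undirected graph `cDB(d,t,n)`: every vertex
is dominated by (equal to, or adjacent to) some element of `S`. -/
def dbUndirDominating {d t n : ℕ} (S : Set (dbVtx d t n)) : Prop :=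
  ∀ v : dbVtx d t n, ∃ s ∈ S, s = v ∨ dbAdj s v

/-- The domination number `γ(cDB(d,t,n))` of the undirected `t`-constrained
de Bruijn graph. -/
noncomputable def gammaUndir (d t n : ℕ) : ℕ :=
  sInf {k | ∃ S : Set (dbVtx d t n), S.Finite ∧ S.ncard = k ∧ dbUndirDominating S}

open Function

theorem Nat.ceil_natCast_div_natCast {K : Type*} [Field K] [LinearOrder K] [IsStrictOrderedRing K]
    [FloorSemiring K] (a b : ℕ) : ⌈(a : K) / b⌉₊ = (a + b - 1) / b := by
  rcases Nat.eq_zero_or_pos b with rfl | hb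
  · simp
  have hb' : (0 : K) < b := by exact_mod_cast hb
  refine eq_of_forall_ge_iff fun m => ?_
  rw [Nat.ceil_le, div_le_iff₀ hb', Nat.div_le_iff_le_mul_add_pred hb]
  norm_cast
  rw [mul_comm]
  omega

theorem dbConstrained_self_iff_injective {d n : ℕ} (x : Fin n → Fin d) :
    dbConstrained d n n x ↔ Injective x := by
  refine ⟨fun h i j hx => ?_, fun h i j hij hx => absurd (h hx) hij.ne⟩
  by_contra hne
  rcases lt_or_gt_of_ne hne with hlt | hlt
  · have := h i j hlt hx
    omega
  · have := h j i hlt hx.symm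
    omega

theorem dbVtx.injective_val {d n : ℕ} (x : dbVtx d n n) : Injective x.val :=
  (dbConstrained_self_iff_injective _).1 x.2

theorem Nat.card_dbVtx_self {d n : ℕ} : Nat.card (dbVtx d n n) = d.descFactorial n := by
  rw [Nat.card_congr ((Equiv.subtypeEquivRight dbConstrained_self_iff_injective).trans
    (Equiv.subtypeInjectiveEquivEmbedding _ _)), Nat.card_eq_fintype_card,
    Fintype.card_embedding_eq, Fintype.card_fin, Fintype.card_fin]

theorem Finite.eq_of_injective_of_forall_ne {α : Type*} [Finite α] {f g : α → α}
    (hf : Injective f) (hg : Injective g) (a : α) (h : ∀ b ≠ a, f b = g b) : f = g := by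
  obtain ⟨c, hc⟩ := (Finite.injective_iff_surjective.1 hg) (f a)
  have hca : c = a := by
    by_contra hne
    exact hne (hf (hc.symm.trans (h c hne).symm)).symm
  funext b
  by_cases hb : b = a
  · rw [hb, ← hc, hca]
  · exact h b hb

section Rotation

variable {n : ℕ}

def dbRotateBy (k : Fin n) (x : dbVtx n n n) : dbVtx n n n :=
  ⟨fun i => x.val (i + k), (dbConstrained_self_iff_injective _).2
    (x.injective_val.comp (add_left_injective k))⟩

@[simp]
theorem dbRotateBy_val (k i : Fin n) (x : dbVtx n n n) : (dbRotateBy k x).val i = x.val (i + k) :=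
  rfl

theorem dbRotateBy_dbRotateBy (k l : Fin n) (x : dbVtx n n n) :
    dbRotateBy k (dbRotateBy l x) = dbRotateBy (k + l) x :=
  Subtype.ext <| funext fun i => by simp [add_assoc]

variable [NeZero n]

@[simp]
theorem dbRotateBy_zero (x : dbVtx n n n) : dbRotateBy 0 x = x := by
  ext i
  simp

theorem dbShift_iff_eq_dbRotateBy_one (x y : dbVtx n n n) : dbShift x y ↔ y = dbRotateBy 1 x := by
  have succ_eq (i : Fin n) (hi : (i : ℕ) + 1 < n) : (⟨i + 1, hi⟩ : Fin n) = i + 1 :=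
    Fin.ext (Fin.val_add_one_of_lt' hi).symm
  refine ⟨fun h => Subtype.ext ?_, ?_⟩
  · -- the last symbol of `y` is forced: it is the one symbol missing from the others
    refine Finite.eq_of_injective_of_forall_ne y.injective_val (dbRotateBy 1 x).injective_val
      ⟨n - 1, by have := NeZero.pos n; omega⟩ fun i hi => ?_
    have hi' : (i : ℕ) + 1 < n := by
      have : (i : ℕ) ≠ n - 1 := fun h => hi (Fin.ext h)
      omega
    rw [h i hi', succ_eq]
    rfl
  · rintro rfl i hi
    rw [succ_eq]
    rfl

theorem dbUndirDominating_iff (S : Set (dbVtx n n n)) :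
    dbUndirDominating S ↔
      ∀ v, ∃ s ∈ S, v = s ∨ v = dbRotateBy 1 s ∨ s = dbRotateBy 1 v := by
  simp only [dbUndirDominating, dbAdj, dbShift_iff_eq_dbRotateBy_one]
  refine forall_congr' fun v => exists_congr fun s => and_congr_right fun _ => ?_
  by_cases h : s = v
  · simp [h]
  · simp [h, Ne.symm h]

noncomputable def zeroPos (x : dbVtx n n n) : Fin n :=
  (Equiv.ofBijective x.val (Finite.injective_iff_bijective.1 x.injective_val)).symm 0

@[simp]
theorem val_zeroPos (x : dbVtx n n n) : x.val (zeroPos x) = 0 :=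
  Equiv.ofBijective_apply_symm_apply _ _ _

theorem zeroPos_eq_of_val_eq_zero {x : dbVtx n n n} {i : Fin n} (h : x.val i = 0) :
    zeroPos x = i :=
  x.injective_val (by rw [h, val_zeroPos])

noncomputable def dbVtxEquiv : dbVtx n n n ≃ {x : dbVtx n n n // x.val 0 = 0} × Fin n where
  toFun x := (⟨dbRotateBy (zeroPos x) x, by simp⟩, zeroPos x)
  invFun w := dbRotateBy (-w.2) w.1
  left_inv x := by simp [dbRotateBy_dbRotateBy]
  right_inv w := by
    have hz : zeroPos (dbRotateBy (-w.2) w.1) = w.2 :=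
      zeroPos_eq_of_val_eq_zero (by simpa using w.1.2)
    ext : 1
    · ext : 1
      simp [hz, dbRotateBy_dbRotateBy]
    · exact hz

theorem dbRotateBy_one_dbVtxEquiv_symm (p : {x : dbVtx n n n // x.val 0 = 0}) (z : Fin n) :
    dbRotateBy 1 (dbVtxEquiv.symm (p, z)) = dbVtxEquiv.symm (p, z - 1) := by
  simp only [dbVtxEquiv, Equiv.coe_fn_symm_mk, dbRotateBy_dbRotateBy]
  congr 1
  abel

theorem Nat.card_dbVtx_head_eq_zero :
    Nat.card {x : dbVtx n n n // x.val 0 = 0} = (n - 1).factorial := by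
  have h := Nat.card_congr (dbVtxEquiv (n := n))
  rw [Nat.card_dbVtx_self, Nat.descFactorial_self, Nat.card_prod, Nat.card_fin,
    ← Nat.mul_factorial_pred (NeZero.ne n), mul_comm] at h
  exact (Nat.eq_of_mul_eq_mul_right (NeZero.pos n) h).symm

end Rotation

section CycleDomination

variable {n : ℕ}

theorem ncard_three_dvd : {z : Fin n | 3 ∣ (z : ℕ)}.ncard = (n + 2) / 3 := by
  have hrange : {z : Fin n | 3 ∣ (z : ℕ)} =
      Set.range fun k : Fin ((n + 2) / 3) => (⟨3 * k, by omega⟩ : Fin n) := by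
    ext z
    refine ⟨fun ⟨k, hk⟩ => ⟨⟨k, by omega⟩, Fin.ext hk.symm⟩, ?_⟩
    rintro ⟨k, rfl⟩
    exact dvd_mul_right 3 (k : ℕ)
  rw [hrange, Set.ncard_range_of_injective, Nat.card_fin]
  intro k l hkl
  ext
  simpa using hkl

variable [NeZero n]

def IsCycleDominating (A : Set (Fin n)) : Prop :=
  ∀ z, z ∈ A ∨ z + 1 ∈ A ∨ z - 1 ∈ A

theorem IsCycleDominating.le_three_mul_ncard {A : Set (Fin n)} (hA : IsCycleDominating A) :
    n ≤ 3 * A.ncard := by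
  have hcover : Set.univ ⊆ A ∪ (· - 1) '' A ∪ (· + 1) '' A := by
    intro z _
    rcases hA z with h | h | h
    · exact Or.inl (Or.inl h)
    · exact Or.inl (Or.inr ⟨z + 1, h, add_sub_cancel_right z 1⟩)
    · exact Or.inr ⟨z - 1, h, sub_add_cancel z 1⟩
  calc n = (Set.univ : Set (Fin n)).ncard := by simp
    _ ≤ (A ∪ (· - 1) '' A ∪ (· + 1) '' A).ncard := Set.ncard_le_ncard hcover
    _ ≤ A.ncard + ((· - 1) '' A).ncard + ((· + 1) '' A).ncard :=
        (Set.ncard_union_le _ _).trans (Nat.add_le_add_right (Set.ncard_union_le _ _) _)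
    _ = 3 * A.ncard := by
        rw [Set.ncard_image_of_injective _ (sub_left_injective (b := (1 : Fin n))),
          Set.ncard_image_of_injective _ (add_left_injective (1 : Fin n))]
        ring

theorem isCycleDominating_three_dvd : IsCycleDominating {z : Fin n | 3 ∣ (z : ℕ)} := by
  obtain _ | m := n
  · exact absurd rfl (NeZero.ne 0)
  intro z
  simp only [Set.mem_ofPred_eq, Fin.val_add_one, Fin.coe_sub_one, Fin.ext_iff, Fin.val_last,
    Fin.val_zero]
  split_ifs <;> omega

theorem mul_le_ncard_of_isCycleDominating {P : Type*} [Finite P] {S : Set (P × Fin n)}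
    (hS : ∀ p, IsCycleDominating {z | (p, z) ∈ S}) :
    Nat.card P * ((n + 2) / 3) ≤ S.ncard := by
  have := Fintype.ofFinite P
  calc Nat.card P * ((n + 2) / 3) = ∑ _p : P, (n + 2) / 3 := by simp
    _ ≤ ∑ p : P, {z | (p, z) ∈ S}.ncard :=
        Finset.sum_le_sum fun p _ => by have := (hS p).le_three_mul_ncard; omega
    _ = S.ncard := by
        rw [← Nat.card_coe_set_eq S,
          Nat.card_congr (Equiv.subtypeProdEquivSigmaSubtype fun p z => (p, z) ∈ S),
          Nat.card_sigma]
        rfl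

end CycleDomination

section Domination

variable {n : ℕ} [NeZero n]

theorem dbUndirDominating_preimage_dbVtxEquiv_iff
    (T : Set ({x : dbVtx n n n // x.val 0 = 0} × Fin n)) :
    dbUndirDominating (dbVtxEquiv ⁻¹' T) ↔ ∀ p, IsCycleDominating {z | (p, z) ∈ T} := by
  rw [dbUndirDominating_iff, dbVtxEquiv.symm.surjective.forall, Prod.forall]
  simp only [dbVtxEquiv.symm.surjective.exists, Prod.exists, Set.mem_preimage,
    Equiv.apply_symm_apply, dbRotateBy_one_dbVtxEquiv_symm, dbVtxEquiv.symm.apply_eq_iff_eq,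
    Prod.mk.injEq]
  refine forall_congr' fun p => forall_congr' fun z => ⟨?_, ?_⟩
  · rintro ⟨q, w, hw, ⟨rfl, rfl⟩ | ⟨rfl, rfl⟩ | ⟨rfl, rfl⟩⟩
    · exact Or.inl hw
    · exact Or.inr (Or.inl (by simpa using hw))
    · exact Or.inr (Or.inr hw)
  · rintro (h | h | h)
    · exact ⟨p, z, h, Or.inl ⟨rfl, rfl⟩⟩
    · exact ⟨p, z + 1, h, Or.inr (Or.inl ⟨rfl, (add_sub_cancel_right z 1).symm⟩)⟩
    · exact ⟨p, z - 1, h, Or.inr (Or.inr ⟨rfl, rfl⟩)⟩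

theorem le_ncard_of_dbUndirDominating {S : Set (dbVtx n n n)} (hS : dbUndirDominating S) :
    (n - 1).factorial * ((n + 2) / 3) ≤ S.ncard := by
  rw [← dbVtxEquiv.preimage_image S] at hS ⊢
  rw [← Nat.card_dbVtx_head_eq_zero, Set.ncard_preimage_of_injective_subset_range
    dbVtxEquiv.injective (by simp)]
  exact mul_le_ncard_of_isCycleDominating ((dbUndirDominating_preimage_dbVtxEquiv_iff _).1 hS)

theorem setOf_three_dvd_zeroPos :
    {x : dbVtx n n n | 3 ∣ (zeroPos x : ℕ)} =
      dbVtxEquiv ⁻¹' (Set.univ ×ˢ {z : Fin n | 3 ∣ (z : ℕ)}) := by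
  ext
  simp [dbVtxEquiv]

theorem dbUndirDominating_setOf_three_dvd_zeroPos :
    dbUndirDominating {x : dbVtx n n n | 3 ∣ (zeroPos x : ℕ)} := by
  rw [setOf_three_dvd_zeroPos, dbUndirDominating_preimage_dbVtxEquiv_iff]
  intro p
  simpa using isCycleDominating_three_dvd

theorem ncard_setOf_three_dvd_zeroPos :
    {x : dbVtx n n n | 3 ∣ (zeroPos x : ℕ)}.ncard = (n - 1).factorial * ((n + 2) / 3) := by
  rw [setOf_three_dvd_zeroPos, Set.ncard_preimage_of_injective_subset_range
    dbVtxEquiv.injective (by simp), Set.ncard_prod, Set.ncard_univ, Nat.card_dbVtx_head_eq_zero,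
    ncard_three_dvd]

end Domination

/-- `γ(cDB(n,n,n)) = ⌈n/3⌉ * (n-1)!`. -/
theorem gammaUndir_permutations (n : ℕ) (hn : 2 ≤ n) :
    gammaUndir n n n = ⌈(n : ℚ) / 3⌉₊ * (n - 1).factorial := by
  have : NeZero n := ⟨by omega⟩
  have hceil : ⌈(n : ℚ) / 3⌉₊ = (n + 2) / 3 := by
    simpa using Nat.ceil_natCast_div_natCast (K := ℚ) n 3
  rw [hceil, mul_comm]
  refine IsLeast.csInf_eq ⟨⟨_, Set.toFinite _, ncard_setOf_three_dvd_zeroPos,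
    dbUndirDominating_setOf_three_dvd_zeroPos⟩, ?_⟩
  rintro k ⟨S, -, rfl, hS⟩
  exact le_ncard_of_dbUndirDominating hS
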